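/- arXiv:1702.00519 — 4 statements merged into one kernel-verified Lean document; each statement's English description precedes it below -/
import Mathlib

section
/- If I is a monomial ideal generated in a single degree d that is stable (respectively strongly stable), and f is the largest minimal generator of I in the co-lexicographic order, then the ideal generated by the remaining minimal generators G(I) \ {f} is again stable (respectively strongly stable). -/
/-!
Let `m` be divisible by a generator `t ≠ f` and let `m' = m·x_q/x_p` (`q < p`) be a move allowed
by (strong) stability. If `x_p ∤ t`, then `t` still divides `m'`. Otherwise the same move sends
`t` to a monomial `t'` of degree `d` in `I`, which is therefore itself a generator and divides
`m'`; and `t' ≠ f`, because `t'` precedes `t` colexicographically while `t` precedes `f`.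
-/

open MvPolynomial Finsupp

/-- The monomial ideal generated by the monomials with exponent vectors in `S`. -/
noncomputable def monomialIdeal (K : Type*) [Field K] {n : ℕ} (S : Finset (Fin n →₀ ℕ)) :
    Ideal (MvPolynomial (Fin n) K) :=
  Ideal.span ((fun s => (monomial s (1 : K))) '' S)

/-- `I` is a stable monomial ideal: for every monomial `m ∈ I` and every `i < max(m)`
(where `j = max(m)` is the largest index with a nonzero exponent), `m·x_i/x_j ∈ I`. -/
def IsStable {K : Type*} [Field K] {n : ℕ} (I : Ideal (MvPolynomial (Fin n) K)) : Prop :=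
  ∀ (s : Fin n →₀ ℕ) (i j : Fin n), monomial s (1 : K) ∈ I →
    s j ≠ 0 → (∀ k, j < k → s k = 0) → i < j →
    monomial (s + single i 1 - single j 1) (1 : K) ∈ I

/-- `I` is a strongly stable monomial ideal: for every monomial `m ∈ I`, every `x_i`
dividing `m` and every `j < i`, one has `m·x_j/x_i ∈ I`. -/
def IsStronglyStable {K : Type*} [Field K] {n : ℕ}
    (I : Ideal (MvPolynomial (Fin n) K)) : Prop :=
  ∀ (s : Fin n →₀ ℕ) (i j : Fin n), monomial s (1 : K) ∈ I →
    s i ≠ 0 → j < i →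
    monomial (s + single j 1 - single i 1) (1 : K) ∈ I

/-- The (strict) co-lexicographic order on exponent vectors of monomials of degree `d`:
`s ≺ t` iff there is `k` with `s k < t k` and `s l = t l` for all `l > k`. -/
def ColexLT {n : ℕ} (s t : Fin n →₀ ℕ) : Prop :=
  ∃ k : Fin n, s k < t k ∧ ∀ l, k < l → s l = t l

lemma monomial_mem_monomialIdeal_iff (K : Type*) [Field K] {n : ℕ}
    (S : Finset (Fin n →₀ ℕ)) (s : Fin n →₀ ℕ) :
    monomial s (1 : K) ∈ monomialIdeal K S ↔ ∃ t ∈ S, t ≤ s := by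
  rw [monomialIdeal, mem_ideal_span_monomial_image]
  simp

lemma monomial_mem_monomialIdeal (K : Type*) [Field K] {n : ℕ}
    {S : Finset (Fin n →₀ ℕ)} {s : Fin n →₀ ℕ} (hs : s ∈ S) :
    monomial s (1 : K) ∈ monomialIdeal K S :=
  (monomial_mem_monomialIdeal_iff K S s).2 ⟨s, hs, le_rfl⟩

lemma ColexLT.asymm {n : ℕ} {s t : Fin n →₀ ℕ} (h : ColexLT s t) : ¬ ColexLT t s := by
  rintro ⟨k', hk', heq'⟩
  obtain ⟨k, hk, heq⟩ := h
  rcases lt_trichotomy k k' with hlt | rfl | hlt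
  · have := heq k' hlt; omega
  · omega
  · have := heq' k hlt; omega

namespace Finsupp

variable {σ : Type*}

lemma eq_of_le_of_degree_eq {s t : σ →₀ ℕ} (hle : s ≤ t) (hdeg : degree s = degree t) :
    s = t := by
  obtain ⟨u, rfl⟩ := le_iff_exists_add.mp hle
  have hu : degree u = 0 := by simpa using hdeg
  rw [(degree_eq_zero_iff u).1 hu, add_zero]

lemma degree_add_single_sub_single {s : σ →₀ ℕ} (p q : σ) (hp : s p ≠ 0) :
    degree (s + single q 1 - single p 1) = degree s := by
  have hle : single p 1 ≤ s + single q 1 := by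
    classical
    intro a
    rw [single_apply]
    split_ifs with h
    · subst h
      simp only [coe_add, Pi.add_apply]
      omega
    · exact Nat.zero_le _
  have := congrArg degree (tsub_add_cancel_of_le hle)
  simp only [map_add, degree_single] at this
  omega

lemma le_add_single_sub_single_of_le {s t : σ →₀ ℕ} (p q : σ) (hts : t ≤ s)
    (hp : t p = 0) : t ≤ s + single q 1 - single p 1 := by
  classical
  intro a
  simp only [coe_tsub, coe_add, Pi.sub_apply, Pi.add_apply, single_apply]
  have := hts a
  split_ifs with h h' <;> subst_vars <;> omega

end Finsupp

lemma colexLT_add_single_sub_single {n : ℕ} {s : Fin n →₀ ℕ} {p q : Fin n} (hqp : q < p)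
    (hp : s p ≠ 0) : ColexLT (s + single q 1 - single p 1) s := by
  refine ⟨p, ?_, fun l hl => ?_⟩
  · simp only [coe_tsub, Finsupp.coe_add, Pi.sub_apply, Pi.add_apply,
      single_eq_of_ne hqp.ne', add_zero, single_eq_same]
    omega
  · simp [single_eq_of_ne (hqp.trans hl).ne', single_eq_of_ne hl.ne']

lemma monomial_add_single_sub_single_mem_monomialIdeal_erase (K : Type*) [Field K] {n d : ℕ}
    {S : Finset (Fin n →₀ ℕ)} (hdeg : ∀ s ∈ S, degree s = d)
    {f : Fin n →₀ ℕ} (hmax : ∀ g ∈ S, g ≠ f → ColexLT g f)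
    {s : Fin n →₀ ℕ} {p q : Fin n} (hqp : q < p)
    (hmove : ∀ t ∈ S, t ≤ s → t p ≠ 0 →
      monomial (t + single q 1 - single p 1) (1 : K) ∈ monomialIdeal K S)
    (hs : monomial s (1 : K) ∈ monomialIdeal K (S.erase f)) :
    monomial (s + single q 1 - single p 1) (1 : K) ∈ monomialIdeal K (S.erase f) := by
  simp_rw [monomial_mem_monomialIdeal_iff] at hmove hs ⊢
  obtain ⟨t, ht, hts⟩ := hs
  obtain ⟨htf, htS⟩ := Finset.mem_erase.1 ht
  by_cases htp : t p = 0
  · exact ⟨t, ht, le_add_single_sub_single_of_le p q hts htp⟩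
  obtain ⟨v, hvS, hvt⟩ := hmove t htS hts htp
  -- `v` and the moved `t` are both of degree `d`, so divisibility forces equality
  obtain rfl : v = t + single q 1 - single p 1 :=
    eq_of_le_of_degree_eq hvt (by rw [degree_add_single_sub_single p q htp, hdeg v hvS, hdeg t htS])
  have hvf : t + single q 1 - single p 1 ≠ f := by
    rintro rfl
    exact (hmax t htS htf).asymm (colexLT_add_single_sub_single hqp htp)
  exact ⟨_, Finset.mem_erase.2 ⟨hvf, hvS⟩, by gcongr⟩

theorem erase_max_stable_general (K : Type*) [Field K] {n d : ℕ}
    (S : Finset (Fin n →₀ ℕ)) (hdeg : ∀ s ∈ S, (s.sum fun _ e => e) = d)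
    (f : Fin n →₀ ℕ) (hmax : ∀ g ∈ S, g ≠ f → ColexLT g f) :
    (IsStable (monomialIdeal K S) → IsStable (monomialIdeal K (S.erase f))) ∧
    (IsStronglyStable (monomialIdeal K S) →
      IsStronglyStable (monomialIdeal K (S.erase f))) := by
  have hdeg' : ∀ s ∈ S, degree s = d := hdeg
  refine ⟨fun hI s i j hs _ hjmax hij => ?_, fun hI s i j hs _ hji => ?_⟩
  · refine monomial_add_single_sub_single_mem_monomialIdeal_erase K hdeg' hmax hij
      (fun t htS hts htj => hI t i j (monomial_mem_monomialIdeal K htS) htj ?_ hij) hs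
    intro k hk
    exact Nat.eq_zero_of_le_zero (hjmax k hk ▸ hts k)
  · exact monomial_add_single_sub_single_mem_monomialIdeal_erase K hdeg' hmax hji
      (fun t htS _ hti => hI t i j (monomial_mem_monomialIdeal K htS) hti hji) hs

/-- If `I` is a (strongly) stable ideal generated in one degree `d`, with minimal
generating set of exponent vectors `S`, and `f` is the co-lexicographically largest
minimal generator, then the ideal generated by `S \ {f}` is again (strongly) stable. -/
theorem erase_max_stable (K : Type*) [Field K] {n d : ℕ}
    (S : Finset (Fin n →₀ ℕ)) (hdeg : ∀ s ∈ S, (s.sum fun _ e => e) = d)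
    (f : Fin n →₀ ℕ) (hf : f ∈ S) (hmax : ∀ g ∈ S, g ≠ f → ColexLT g f) :
    (IsStable (monomialIdeal K S) → IsStable (monomialIdeal K (S.erase f))) ∧
    (IsStronglyStable (monomialIdeal K S) →
      IsStronglyStable (monomialIdeal K (S.erase f))) :=
  erase_max_stable_general K S hdeg f hmax
end

section
/- If I is a stable monomial ideal generated in degree 2 in K[x_1,...,x_n], a-determined for a vector a, then the a-dual \hat{I}^{[a]} has linear quotients. -/
open MvPolynomial Finsupp

/-- Exponent vectors of the generators `x^a / f` of the `a`-dual. -/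
noncomputable def dualGens {n : ℕ} (a : Fin n →₀ ℕ) (S : Finset (Fin n →₀ ℕ)) :
    Finset (Fin n →₀ ℕ) :=
  S.image (fun s => a - s)

/-- Linear quotients: an ordering `g_1,…,g_v` of the generators such that each
`(g_1,…,g_{k-1}) : g_k` is generated by variables. -/
def HasLinearQuotients (K : Type*) [Field K] {n : ℕ} (T : Finset (Fin n →₀ ℕ)) : Prop :=
  ∃ L : List (Fin n →₀ ℕ), L.Nodup ∧ L.toFinset = T ∧
    ∀ (k : ℕ) (hk : k < L.length), 1 ≤ k →
      ∃ V : Set (Fin n),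
        Submodule.colon (monomialIdeal K (L.take k).toFinset)
            (Ideal.span {monomial (L.get ⟨k, hk⟩) (1 : K)}) =
          Ideal.span ((fun j => (X j : MvPolynomial (Fin n) K)) '' V)

/-!
Order the generators `m_1, …, m_r` of `I` increasingly in the colex order and list the dual
generators `x^a / m_k` in the same order. Since every `m_j` divides `x^a`, the colon ideal
`(x^a / m_1, …, x^a / m_(k-1)) : x^a / m_k` is generated by the `m_k / gcd(m_j, m_k)`, `j < k`,
so it is generated by variables as soon as each of these is divisible by one of them that is a
variable. If `m_j` and `m_k` share a variable, `m_k / gcd(m_j, m_k)` is a variable. If they are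
coprime, the colex order gives a variable `x_p` of `m_j` with `p < M = max m_k`; by stability
`m_k x_p / x_M` is a generator preceding `m_k`, and `m_k / gcd(m_k, m_k x_p / x_M) = x_M`
divides `m_k`.
-/

theorem Finsupp.eq_of_le_of_degree_le {σ : Type*} {u v : σ →₀ ℕ} (h : u ≤ v)
    (hd : degree v ≤ degree u) : u = v := by
  obtain ⟨w, rfl⟩ := le_iff_exists_add.1 h
  have hw : degree w = 0 := by rw [map_add] at hd; omega
  rw [(degree_eq_zero_iff w).1 hw, add_zero]

theorem Finsupp.lt_max'_of_toColex_lt {σ : Type*} [LinearOrder σ] {s s' : σ →₀ ℕ}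
    (h : toColex s' < toColex s) (hdisj : ∀ x, s x ≠ 0 → s' x = 0) (hs : s.support.Nonempty)
    {p : σ} (hp : p ∈ s'.support) : p < s.support.max' hs := by
  obtain ⟨i, hi, hlt⟩ := Colex.lt_iff.1 h
  simp only [ofColex_toColex] at hi hlt
  have hMp_ne : s.support.max' hs ≠ p := fun hMp =>
    mem_support_iff.1 hp (hMp ▸ hdisj _ (mem_support_iff.1 (s.support.max'_mem hs)))
  by_contra hpM
  have hMp : s.support.max' hs < p := lt_of_le_of_ne (not_lt.1 hpM) hMp_ne
  have hip : i < p := (s.support.le_max' i (mem_support_iff.2 (by omega))).trans_lt hMp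
  have hsp : s p = 0 := notMem_support_iff.1 fun hp' => (s.support.le_max' p hp').not_gt hMp
  exact mem_support_iff.1 hp (hsp ▸ hi p hip)

theorem List.SortedLT.mem_take_iff_lt {α : Type*} [LinearOrder α] {l : List α}
    (hl : l.SortedLT) {k : ℕ} (hk : k < l.length) {x : α} (hx : x ∈ l) :
    x ∈ l.take k ↔ x < l[k] := by
  rw [List.mem_take_iff_getElem]
  constructor
  · rintro ⟨i, hi, rfl⟩
    exact hl.getElem_lt_getElem_iff.2 (by omega)
  · obtain ⟨j, hj, rfl⟩ := List.getElem_of_mem hx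
    exact fun hjk => ⟨j, by simp [hl.getElem_lt_getElem_iff.1 hjk, hj], rfl⟩

section

variable {K : Type*} [Field K] {n : ℕ}

theorem mem_monomialIdeal_monomial_iff {S : Finset (Fin n →₀ ℕ)} {w : Fin n →₀ ℕ} :
    monomial w (1 : K) ∈ monomialIdeal K S ↔ ∃ s ∈ S, s ≤ w := by
  classical
  simp [monomialIdeal, mem_ideal_span_monomial_image, support_monomial]

theorem colon_monomialIdeal_span_monomial (T : Finset (Fin n →₀ ℕ)) (u : Fin n →₀ ℕ) :
    Submodule.colon (monomialIdeal K T) (Ideal.span {monomial u (1 : K)}) =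
      monomialIdeal K (T.image (· - u)) := by
  classical
  ext f
  have hsupp : ∀ m, m ∈ (f * monomial u 1).support ↔ u ≤ m ∧ m - u ∈ f.support := by
    intro m
    simp [MvPolynomial.mem_support_iff, coeff_mul_monomial']
  simp only [Ideal.mem_colon_span_singleton, monomialIdeal, mem_ideal_span_monomial_image,
    Finset.coe_image, Set.mem_image, Finset.mem_coe, exists_exists_and_eq_and, hsupp]
  constructor
  · intro h w hw
    obtain ⟨t, ht, hle⟩ := h (w + u) ⟨le_add_self, by simpa using hw⟩
    exact ⟨t, ht, tsub_le_iff_right.2 hle⟩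
  · rintro h m ⟨hum, hmu⟩
    obtain ⟨t, ht, hle⟩ := h _ hmu
    exact ⟨t, ht, tsub_add_cancel_of_le hum ▸ tsub_le_iff_right.1 hle⟩

theorem monomialIdeal_eq_span_X_of_forall_exists_single_le {G : Finset (Fin n →₀ ℕ)}
    (h : ∀ g ∈ G, ∃ i, single i 1 ∈ G ∧ single i 1 ≤ g) :
    monomialIdeal K G = Ideal.span (X '' {i | single i 1 ∈ G}) := by
  classical
  apply le_antisymm
  · refine Ideal.span_le.2 ?_
    rintro _ ⟨g, hg, rfl⟩
    obtain ⟨i, hiG, hig⟩ := h g hg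
    rw [SetLike.mem_coe, mem_ideal_span_X_image]
    intro m hm
    rw [support_monomial, if_neg one_ne_zero, Finset.mem_singleton] at hm
    subst hm
    exact ⟨i, hiG, by simpa [single_le_iff, Nat.one_le_iff_ne_zero] using hig⟩
  · refine Ideal.span_le.2 ?_
    rintro _ ⟨i, hi, rfl⟩
    exact Ideal.subset_span ⟨single i 1, hi, rfl⟩

theorem hasLinearQuotients_toFinset_of_forall_exists {L : List (Fin n →₀ ℕ)} (hL : L.Nodup)
    (h : ∀ (k : ℕ) (hk : k < L.length), ∀ g ∈ L.take k,
      ∃ g' ∈ L.take k, ∃ i, g' - L[k] = single i 1 ∧ single i 1 ≤ g - L[k]) :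
    HasLinearQuotients K L.toFinset := by
  classical
  refine ⟨L, hL, rfl, fun k hk _ =>
    ⟨{i | single i 1 ∈ (L.take k).toFinset.image (· - L[k])}, ?_⟩⟩
  rw [List.get_eq_getElem, colon_monomialIdeal_span_monomial]
  refine monomialIdeal_eq_span_X_of_forall_exists_single_le ?_
  simp only [Finset.mem_image, List.mem_toFinset, forall_exists_index, and_imp,
    forall_apply_eq_imp_iff₂]
  intro g hg
  obtain ⟨g', hg', i, hi, hle⟩ := h k hk g hg
  exact ⟨i, ⟨g', hg', hi⟩, hle⟩

theorem hasLinearQuotients_dualGens_of_forall_toColex_lt {a : Fin n →₀ ℕ}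
    {S : Finset (Fin n →₀ ℕ)} (hdet : ∀ s ∈ S, s ≤ a)
    (h : ∀ s ∈ S, ∀ s' ∈ S, toColex s' < toColex s →
      ∃ s'' ∈ S, toColex s'' < toColex s ∧ ∃ i, s - s'' = single i 1 ∧ single i 1 ≤ s - s') :
    HasLinearQuotients K (dualGens a S) := by
  classical
  set l := (S.map toColex.toEmbedding).sort
  have hl : l.SortedLT := Finset.sortedLT_sort _
  have hmem : ∀ c, c ∈ l ↔ ofColex c ∈ S := by simp [l]
  have hinj : Set.InjOn (fun c => a - ofColex c) {c | c ∈ l} := fun c hc c' hc' hcc' => by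
    simpa [tsub_tsub_cancel_of_le, hdet, (hmem _).1 hc, (hmem _).1 hc'] using
      congrArg (a - ·) hcc'
  have hL : (l.map (fun c => a - ofColex c)).toFinset = dualGens a S := by
    ext g
    simp [hmem, dualGens]
  rw [← hL]
  refine hasLinearQuotients_toFinset_of_forall_exists (hl.nodup.map_on hinj) ?_
  intro k hk g hg
  rw [List.length_map] at hk
  rw [← List.map_take, List.mem_map] at hg
  rw [← List.map_take]
  obtain ⟨c', hc', rfl⟩ := hg
  have hc'l := List.mem_of_mem_take hc'
  obtain ⟨s'', hs'', hlt, i, hi, hle⟩ := h (ofColex l[k]) ((hmem _).1 (List.getElem_mem hk))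
    (ofColex c') ((hmem _).1 hc'l) ((hl.mem_take_iff_lt hk hc'l).1 hc')
  refine ⟨a - s'',
    List.mem_map.2 ⟨toColex s'', (hl.mem_take_iff_lt hk ((hmem _).2 hs'')).2 hlt, rfl⟩, i, ?_⟩
  simp only [List.getElem_map]
  rw [tsub_tsub_tsub_cancel_left (hdet _ ((hmem _).1 (List.getElem_mem hk))),
    tsub_tsub_tsub_cancel_left (hdet _ ((hmem _).1 (List.getElem_mem hk)))]
  exact ⟨hi, hle⟩

variable {S : Finset (Fin n →₀ ℕ)}

theorem IsStable.sub_single_max'_add_single_mem (hstable : IsStable (monomialIdeal K S))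
    {d : ℕ} (hdeg : ∀ s ∈ S, degree s = d) {s : Fin n →₀ ℕ} (hs : s ∈ S)
    (hne : s.support.Nonempty) {p : Fin n} (hp : p < s.support.max' hne) :
    s - single (s.support.max' hne) 1 + single p 1 ∈ S := by
  set M := s.support.max' hne
  have hMs : single M 1 ≤ s :=
    single_le_iff.2 (Nat.one_le_iff_ne_zero.2 (mem_support_iff.1 (s.support.max'_mem hne)))
  have hmem := hstable s p M (mem_monomialIdeal_monomial_iff.2 ⟨s, hs, le_rfl⟩)
    (mem_support_iff.1 (s.support.max'_mem hne))
    (fun k hk => notMem_support_iff.1 fun hk' => (s.support.le_max' k hk').not_gt hk) hp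
  rw [← tsub_add_eq_add_tsub hMs, mem_monomialIdeal_monomial_iff] at hmem
  obtain ⟨u, hu, hle⟩ := hmem
  have hdeg_s : degree (s - single M 1) + 1 = d := by
    rw [← hdeg s hs]
    conv_rhs => rw [← tsub_add_cancel_of_le hMs, map_add, degree_single]
  rwa [← eq_of_le_of_degree_le hle (by rw [map_add, degree_single, hdeg_s, hdeg u hu])]

theorem IsStable.exists_toColex_lt_sub_eq_single_of_disjoint
    (hstable : IsStable (monomialIdeal K S)) {d : ℕ} (hdeg : ∀ s ∈ S, degree s = d)
    {s s' : Fin n →₀ ℕ} (hs : s ∈ S) (hs' : s' ∈ S) (hlt : toColex s' < toColex s)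
    (hdisj : ∀ x, s x ≠ 0 → s' x = 0) :
    ∃ s'' ∈ S, toColex s'' < toColex s ∧ ∃ i, s - s'' = single i 1 ∧ single i 1 ≤ s := by
  obtain ⟨p, hp⟩ : s'.support.Nonempty := by
    rw [support_nonempty_iff]
    rintro rfl
    have h0 : degree s = 0 := (hdeg s hs).trans ((hdeg 0 hs').symm.trans (map_zero _))
    rw [degree_eq_zero_iff] at h0
    exact lt_irrefl _ (h0 ▸ hlt)
  have hne : s.support.Nonempty := by
    obtain ⟨i, -, hi⟩ := Colex.lt_iff.1 hlt
    exact ⟨i, mem_support_iff.2 (Nat.ne_zero_of_lt hi)⟩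
  set M := s.support.max' hne
  have hpM := lt_max'_of_toColex_lt hlt hdisj hne hp
  have hMs : single M 1 ≤ s :=
    single_le_iff.2 (Nat.one_le_iff_ne_zero.2 (mem_support_iff.1 (s.support.max'_mem hne)))
  have hs_eq : s - single M 1 + single M 1 = s := tsub_add_cancel_of_le hMs
  refine ⟨s - single M 1 + single p 1, hstable.sub_single_max'_add_single_mem hdeg hs hne hpM,
    ?_, M, ?_, hMs⟩
  · nth_rewrite 2 [← hs_eq]
    rw [toColex_add, toColex_add]
    exact add_lt_add_right (Colex.single_lt_iff.2 hpM) _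
  · nth_rewrite 1 [← hs_eq]
    rw [add_tsub_add_eq_tsub_left]
    ext x
    simp only [tsub_apply, single_apply]
    split_ifs <;> omega

theorem IsStable.exists_toColex_lt_sub_eq_single (hstable : IsStable (monomialIdeal K S))
    (hdeg : ∀ s ∈ S, degree s = 2) {s s' : Fin n →₀ ℕ} (hs : s ∈ S) (hs' : s' ∈ S)
    (hlt : toColex s' < toColex s) :
    ∃ s'' ∈ S, toColex s'' < toColex s ∧ ∃ i, s - s'' = single i 1 ∧ single i 1 ≤ s - s' := by
  have hd_le : degree (s - s') ≤ 2 := hdeg s hs ▸ degree_mono tsub_le_self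
  have hd_ne : degree (s - s') ≠ 0 := by
    rw [Ne, degree_eq_zero_iff, tsub_eq_zero_iff_le]
    intro hss'
    rw [eq_of_le_of_degree_le hss' (by rw [hdeg s hs, hdeg s' hs'])] at hlt
    exact lt_irrefl _ hlt
  obtain hd | hd : degree (s - s') = 1 ∨ degree (s - s') = 2 := by omega
  · obtain ⟨i, hi⟩ := (sum_eq_one_iff _).1 hd
    exact ⟨s', hs', hlt, i, hi, hi.ge⟩
  · have hss' : s - s' = s := eq_of_le_of_degree_le tsub_le_self (by rw [hd, hdeg s hs])
    rw [hss']
    refine hstable.exists_toColex_lt_sub_eq_single_of_disjoint hdeg hs hs' hlt fun x hx => ?_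
    have := DFunLike.congr_fun hss' x
    rw [tsub_apply] at this
    omega

end

/-- If `I` is a stable monomial ideal generated in degree `2`, `a`-determined, then
its `a`-dual has linear quotients. -/
theorem dual_stable_degTwo_hasLinearQuotients (K : Type*) [Field K] {n : ℕ}
    (a : Fin n →₀ ℕ) (S : Finset (Fin n →₀ ℕ))
    (hstable : IsStable (monomialIdeal K S))
    (hdeg : ∀ s ∈ S, (s.sum fun _ e => e) = 2)
    (hdet : ∀ s ∈ S, s ≤ a) :
    HasLinearQuotients K (dualGens a S) :=
  hasLinearQuotients_dualGens_of_forall_toColex_lt hdet fun _ hs _ hs' hlt =>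
    hstable.exists_toColex_lt_sub_eq_single hdeg hs hs' hlt
end

section
/- Let I be a monomial ideal generated in a single degree d, a-determined, with minimal generators f_1,...,f_ν. Then the toric K-algebras K[f_1 t,...,f_ν t] and K[\hat{f}_1 t,...,\hat{f}_ν t] (subalgebras of R[t]) are isomorphic as K-algebras, via the map sending f_i t to \hat{f}_i t, where \hat{f}_i = x^a/f_i. -/
/-!
Send `x^m t^j ∈ K[x][t]` to the basis element `(m, j)` of the group algebra `K[ℤⁿ × ℕ]`; this is
an injective `K`-algebra map. The additive automorphism `(m, j) ↦ (j • a - m, j)` of `ℤⁿ × ℕ`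
induces an automorphism of `K[ℤⁿ × ℕ]` carrying the image of `x^{g_k} t` to that of
`x^{a - g_k} t`, so both toric algebras are isomorphic to the same subalgebra of `K[ℤⁿ × ℕ]`.
-/

open MvPolynomial Finsupp Function

noncomputable section

section Adjoin

variable {R A B C ι : Type*} [CommSemiring R] [Semiring A] [Semiring B] [Semiring C]
  [Algebra R A] [Algebra R B] [Algebra R C]

theorem exists_adjoin_algEquiv_of_comp_eq (φ : A →ₐ[R] C) (ψ : B →ₐ[R] C)
    (hφ : Injective φ) (hψ : Injective ψ) (x : ι → A) (y : ι → B)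
    (hxy : ∀ i, φ (x i) = ψ (y i)) :
    ∃ e : Algebra.adjoin R (Set.range x) ≃ₐ[R] Algebra.adjoin R (Set.range y),
      ∀ i, (e ⟨x i, Algebra.subset_adjoin (Set.mem_range_self i)⟩ : B) = y i := by
  have hmap :
      (Algebra.adjoin R (Set.range x)).map φ = (Algebra.adjoin R (Set.range y)).map ψ := by
    rw [AlgHom.map_adjoin, AlgHom.map_adjoin, ← Set.range_comp, ← Set.range_comp,
      show ⇑φ ∘ x = ⇑ψ ∘ y from _root_.funext hxy]
  let eψ := (Algebra.adjoin R (Set.range y)).equivMapOfInjective ψ hψ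
  refine ⟨(Subalgebra.equivMapOfInjective _ φ hφ).trans
    ((Subalgebra.equivOfEq _ _ hmap).trans eψ.symm), fun i => hψ ?_⟩
  change ((eψ (eψ.symm _) : C)) = _
  rw [AlgEquiv.apply_symm_apply]
  exact hxy i

end Adjoin

variable {σ : Type*}

def castExponent : (σ →₀ ℕ) →+ (σ →₀ ℤ) :=
  mapRange.addMonoidHom (Nat.castAddMonoidHom ℤ)

theorem castExponent_injective : Injective (castExponent (σ := σ)) :=
  mapRange_injective _ Nat.cast_zero Nat.cast_injective

theorem castExponent_tsub {a m : σ →₀ ℕ} (h : m ≤ a) :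
    castExponent (a - m) = castExponent a - castExponent m := by
  ext i
  simp [castExponent, Nat.cast_sub (h i)]

/-- `none` plays the role of the variable `t`, as in `MvPolynomial.optionEquivLeft`. -/
def exponentHom : (Option σ →₀ ℕ) →+ (σ →₀ ℤ) × ℕ where
  toFun u := (castExponent u.some, u none)
  map_zero' := by simp
  map_add' u v := by simp [some_add]

theorem exponentHom_injective : Injective (exponentHom (σ := σ)) := by
  intro u v h
  obtain ⟨hsome, hnone⟩ := Prod.ext_iff.mp h
  ext (_ | i)
  · exact hnone
  · exact DFunLike.congr_fun (castExponent_injective hsome) i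

theorem exponentHom_optionElim (m : σ →₀ ℕ) (j : ℕ) :
    exponentHom (m.optionElim j) = (castExponent m, j) := by
  simp [exponentHom]

variable (K : Type*) [CommSemiring K]

def polynomialEmbedding :
    Polynomial (MvPolynomial σ K) →ₐ[K] AddMonoidAlgebra K ((σ →₀ ℤ) × ℕ) :=
  (AddMonoidAlgebra.mapDomainAlgHom K K exponentHom).comp (optionEquivLeft K σ).symm.toAlgHom

theorem polynomialEmbedding_injective : Injective (polynomialEmbedding (σ := σ) K) :=
  (AddMonoidAlgebra.mapDomain_injective exponentHom_injective).comp (AlgEquiv.injective _)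

theorem polynomialEmbedding_monomial (m : σ →₀ ℕ) (j : ℕ) (r : K) :
    polynomialEmbedding K (Polynomial.monomial j (monomial m r)) =
      AddMonoidAlgebra.single (castExponent m, j) r := by
  have hmon : Polynomial.monomial j (monomial m r) =
      optionEquivLeft K σ (monomial (m.optionElim j) r) := by
    rw [optionEquivLeft_monomial]; simp
  rw [polynomialEmbedding, AlgHom.comp_apply, hmon]
  simp [← single_eq_monomial, exponentHom_optionElim]

def dualAddEquiv {M : Type*} [AddCommGroup M] (a : M) : (M × ℕ) ≃+ (M × ℕ) where
  toFun p := (p.2 • a - p.1, p.2)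
  invFun p := (p.2 • a - p.1, p.2)
  left_inv p := by simp
  right_inv p := by simp
  map_add' p q := by
    simp only [Prod.fst_add, Prod.snd_add, add_smul, Prod.mk_add_mk, Prod.mk.injEq]
    exact ⟨by abel, trivial⟩

end

theorem specialFiber_iso_dual_general (K : Type*) [Field K] {n ν : ℕ} (a : Fin n →₀ ℕ)
    (g : Fin ν → (Fin n →₀ ℕ))
    (hdet : ∀ k, g k ≤ a) :
    ∃ e : Algebra.adjoin K
            (Set.range fun k : Fin ν =>
              (Polynomial.C (monomial (g k) (1 : K)) * Polynomial.X :
                Polynomial (MvPolynomial (Fin n) K))) ≃ₐ[K]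
          Algebra.adjoin K
            (Set.range fun k : Fin ν =>
              (Polynomial.C (monomial (a - g k) (1 : K)) * Polynomial.X :
                Polynomial (MvPolynomial (Fin n) K))),
      ∀ k : Fin ν,
        (e ⟨Polynomial.C (monomial (g k) (1 : K)) * Polynomial.X,
              Algebra.subset_adjoin (Set.mem_range_self k)⟩ :
            Polynomial (MvPolynomial (Fin n) K)) =
          Polynomial.C (monomial (a - g k) (1 : K)) * Polynomial.X := by
  let Φ := polynomialEmbedding (σ := Fin n) K
  let dual := AddMonoidAlgebra.domCongr K K (dualAddEquiv (castExponent a))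
  refine exists_adjoin_algEquiv_of_comp_eq (dual.toAlgHom.comp Φ) Φ
    (dual.injective.comp (polynomialEmbedding_injective K)) (polynomialEmbedding_injective K)
    _ _ fun k => ?_
  simp only [AlgHom.comp_apply, Polynomial.C_mul_X_eq_monomial, Φ, polynomialEmbedding_monomial]
  simp [dual, dualAddEquiv, castExponent_tsub (hdet k)]

/-- Special fiber rings of an `a`-determined monomial ideal generated in one degree and
of its `a`-dual are isomorphic: the toric algebras `K[f_1 t,…,f_ν t]` and
`K[\hat f_1 t,…,\hat f_ν t]` inside `R[t]` are isomorphic as `K`-algebras via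
`f_k t ↦ \hat f_k t`, where `\hat f_k = x^a/f_k`. -/
theorem specialFiber_iso_dual (K : Type*) [Field K] {n ν d : ℕ} (a : Fin n →₀ ℕ)
    (g : Fin ν → (Fin n →₀ ℕ))
    (hdet : ∀ k, g k ≤ a)
    (hdeg : ∀ k, ((g k).sum fun _ e => e) = d) :
    ∃ e : Algebra.adjoin K
            (Set.range fun k : Fin ν =>
              (Polynomial.C (monomial (g k) (1 : K)) * Polynomial.X :
                Polynomial (MvPolynomial (Fin n) K))) ≃ₐ[K]
          Algebra.adjoin K
            (Set.range fun k : Fin ν =>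
              (Polynomial.C (monomial (a - g k) (1 : K)) * Polynomial.X :
                Polynomial (MvPolynomial (Fin n) K))),
      ∀ k : Fin ν,
        (e ⟨Polynomial.C (monomial (g k) (1 : K)) * Polynomial.X,
              Algebra.subset_adjoin (Set.mem_range_self k)⟩ :
            Polynomial (MvPolynomial (Fin n) K)) =
          Polynomial.C (monomial (a - g k) (1 : K)) * Polynomial.X :=
  specialFiber_iso_dual_general K a g hdet
end

section
/- Let D_{λ−μ} be a connected shifted quasi-Ferrers diagram containing at least two lattice points. Then there exists a lattice point c in D_{λ−μ} such that D_{λ−μ} \ {c} is again a connected shifted quasi-Ferrers diagram (for a suitable modified pair λ', μ'). -/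
/-!
With nonempty rows, `D_{λ−μ}` is connected exactly when consecutive rows overlap:
`μ_i < λ_{i+1}` and `μ_{i+1} < λ_i`. A walk from row `i` to row `i + 1` must take a vertical
step in a common column, and conversely the column `min λ_i λ_{i+1}` links the two rows. So it is
enough to remove a cell of the top row `h` without breaking its overlap with row `h - 1`: the
whole row if it is a single cell (lowering `h`), else its left end `(h, μ_h + 1)` if
`λ_h ≤ λ_{h-1}` and its right end `(h, λ_h)` if `λ_{h-1} < λ_h`.
-/

/-- The shifted quasi-Ferrers diagram `D_{λ−μ} = {(i,j) : 1 ≤ i ≤ h, μ_i < j ≤ λ_i}`. -/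
def quasiFerrers (h : ℕ) (lam mu : ℕ → ℕ) : Set (ℕ × ℕ) :=
  {p | 1 ≤ p.1 ∧ p.1 ≤ h ∧ mu p.1 < p.2 ∧ p.2 ≤ lam p.1}

/-- A quasi-Borel move of geometric length 1 between two points of `D`. -/
def UnitStep (D : Set (ℕ × ℕ)) (c c' : ℕ × ℕ) : Prop :=
  c ∈ D ∧ c' ∈ D ∧
    ((c.1 = c'.1 ∧ (c.2 + 1 = c'.2 ∨ c'.2 + 1 = c.2)) ∨
     (c.2 = c'.2 ∧ (c.1 + 1 = c'.1 ∨ c'.1 + 1 = c.1)))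

/-- `D` is connected: every pair of its points is joined by a walk of quasi-Borel
moves of geometric length 1 staying inside `D`. -/
def DiagramConnected (D : Set (ℕ × ℕ)) : Prop :=
  ∀ c ∈ D, ∀ c' ∈ D, Relation.ReflTransGen (UnitStep D) c c'

open Relation

instance (D : Set (ℕ × ℕ)) : Std.Symm (UnitStep D) :=
  ⟨fun _ _ ⟨hc, hc', hadj⟩ => ⟨hc', hc, by omega⟩⟩

theorem exists_vertical_unitStep_of_reflTransGen {D : Set (ℕ × ℕ)} {a b : ℕ × ℕ}
    (hab : ReflTransGen (UnitStep D) a b) {i : ℕ} (ha : a.1 ≤ i) (hb : i < b.1) :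
    ∃ j, (i, j) ∈ D ∧ (i + 1, j) ∈ D := by
  induction hab with
  | refl => omega
  | @tail c d _ hcd ih =>
    by_cases hc : c.1 ≤ i
    · obtain ⟨hcD, hdD, hadj⟩ := hcd
      have hci : c = (i, c.2) := Prod.ext (by omega) rfl
      have hdi : d = (i + 1, c.2) := Prod.ext (by omega) (by omega)
      exact ⟨c.2, hci ▸ hcD, hdi ▸ hdD⟩
    · exact ih (by omega)

def RowsOverlap (h : ℕ) (lam mu : ℕ → ℕ) : Prop :=
  ∀ i, 1 ≤ i → i < h → mu i < lam (i + 1) ∧ mu (i + 1) < lam i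

def IsShiftedPair (h : ℕ) (lam mu : ℕ → ℕ) : Prop :=
  ∀ i, 1 ≤ i → i ≤ h → i - 1 ≤ mu i ∧ mu i < lam i

section Rows

variable {h h' : ℕ} {lam mu lam' mu' : ℕ → ℕ}

theorem IsShiftedPair.mono (hpart : IsShiftedPair h lam mu) (hle : h' ≤ h) :
    IsShiftedPair h' lam mu :=
  fun i hi hih => hpart i hi (hih.trans hle)

theorem RowsOverlap.mono (hov : RowsOverlap h lam mu) (hle : h' ≤ h) : RowsOverlap h' lam mu :=
  fun i hi hih => hov i hi (hih.trans_le hle)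

theorem IsShiftedPair.of_eq_below_top (hpart : IsShiftedPair h lam mu)
    (hlam : ∀ i ≤ h, lam' i = lam i) (hmu : ∀ i ≤ h, mu' i = mu i)
    (htop : h ≤ mu' (h + 1) ∧ mu' (h + 1) < lam' (h + 1)) : IsShiftedPair (h + 1) lam' mu' := by
  intro i hi hih
  rcases hih.lt_or_eq with hih | rfl
  · rw [hlam i (by omega), hmu i (by omega)]
    exact hpart i hi (by omega)
  · exact htop

theorem RowsOverlap.of_eq_below_top (hov : RowsOverlap h lam mu)
    (hlam : ∀ i ≤ h, lam' i = lam i) (hmu : ∀ i ≤ h, mu' i = mu i)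
    (htop : 0 < h → mu' h < lam' (h + 1) ∧ mu' (h + 1) < lam' h) :
    RowsOverlap (h + 1) lam' mu' := by
  intro i hi hih
  rcases (Nat.lt_succ_iff.1 hih).lt_or_eq with hih | rfl
  · rw [hlam i (by omega), hmu i (by omega), hlam (i + 1) hih, hmu (i + 1) hih]
    exact hov i hi hih
  · exact htop hi

end Rows

section Connectivity

variable {h : ℕ} {lam mu : ℕ → ℕ}

@[simp]
theorem mk_mem_quasiFerrers {i j : ℕ} :
    (i, j) ∈ quasiFerrers h lam mu ↔ 1 ≤ i ∧ i ≤ h ∧ mu i < j ∧ j ≤ lam i :=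
  Iff.rfl

theorem mk_lam_mem_quasiFerrers {i : ℕ} (hi : 1 ≤ i) (hih : i ≤ h) (hrow : mu i < lam i) :
    (i, lam i) ∈ quasiFerrers h lam mu :=
  ⟨hi, hih, hrow, le_rfl⟩

theorem mk_mu_succ_mem_quasiFerrers {i : ℕ} (hi : 1 ≤ i) (hih : i ≤ h) (hrow : mu i < lam i) :
    (i, mu i + 1) ∈ quasiFerrers h lam mu :=
  ⟨hi, hih, Nat.lt_succ_self _, hrow⟩

theorem reflTransGen_unitStep_row {i j j' : ℕ} (hj : (i, j) ∈ quasiFerrers h lam mu)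
    (hj' : (i, j') ∈ quasiFerrers h lam mu) :
    ReflTransGen (UnitStep (quasiFerrers h lam mu)) (i, j) (i, j') := by
  wlog hle : j ≤ j' generalizing j j'
  · exact Std.Symm.symm _ _ (this hj' hj (by omega))
  induction j', hle using Nat.le_induction with
  | base => exact .refl
  | succ k hjk ih =>
    rw [mk_mem_quasiFerrers] at hj hj'
    have hk : (i, k) ∈ quasiFerrers h lam mu :=
      mk_mem_quasiFerrers.2 ⟨by omega, by omega, by omega, by omega⟩
    exact (ih hk).tail ⟨hk, mk_mem_quasiFerrers.2 hj', Or.inl ⟨rfl, Or.inl rfl⟩⟩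

theorem rowsOverlap_of_diagramConnected (hrow : ∀ i, 1 ≤ i → i ≤ h → mu i < lam i)
    (hconn : DiagramConnected (quasiFerrers h lam mu)) : RowsOverlap h lam mu := by
  intro i hi hih
  obtain ⟨j, hj, hj'⟩ := exists_vertical_unitStep_of_reflTransGen (i := i)
    (hconn _ (mk_lam_mem_quasiFerrers hi hih.le (hrow i hi hih.le))
      _ (mk_lam_mem_quasiFerrers (by omega) hih (hrow (i + 1) (by omega) hih)))
    le_rfl (Nat.lt_succ_self i)
  rw [mk_mem_quasiFerrers] at hj hj'
  omega

theorem diagramConnected_of_rowsOverlap (hrow : ∀ i, 1 ≤ i → i ≤ h → mu i < lam i)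
    (hov : RowsOverlap h lam mu) : DiagramConnected (quasiFerrers h lam mu) := by
  set D := quasiFerrers h lam mu
  have hsucc : ∀ i, 1 ≤ i → i < h →
      ReflTransGen (UnitStep D) (i, lam i) (i + 1, lam (i + 1)) := by
    intro i hi hih
    obtain ⟨hlo, hhi⟩ := hov i hi hih
    have hrowi := hrow i hi hih.le
    have hrowi' := hrow (i + 1) (by omega) hih
    have hm : (i, min (lam i) (lam (i + 1))) ∈ D :=
      mk_mem_quasiFerrers.2 ⟨hi, hih.le, by omega, by omega⟩
    have hm' : (i + 1, min (lam i) (lam (i + 1))) ∈ D :=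
      mk_mem_quasiFerrers.2 ⟨by omega, hih, by omega, by omega⟩
    exact ((reflTransGen_unitStep_row (mk_lam_mem_quasiFerrers hi hih.le hrowi) hm).tail
      ⟨hm, hm', Or.inr ⟨rfl, Or.inl rfl⟩⟩).trans
      (reflTransGen_unitStep_row hm' (mk_lam_mem_quasiFerrers (by omega) hih hrowi'))
  have hfirst : ∀ i, 1 ≤ i → i ≤ h → ReflTransGen (UnitStep D) (1, lam 1) (i, lam i) := by
    intro i hi
    induction i, hi using Nat.le_induction with
    | base => exact fun _ => .refl
    | succ k hk ih => exact fun hkh => (ih (by omega)).trans (hsucc k hk hkh)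
  have hanchor : ∀ c ∈ D, ReflTransGen (UnitStep D) (1, lam 1) c := fun c hc =>
    (hfirst c.1 hc.1 hc.2.1).trans (reflTransGen_unitStep_row
      (mk_lam_mem_quasiFerrers hc.1 hc.2.1 (hc.2.2.1.trans_le hc.2.2.2)) hc)
  exact fun c hc c' hc' => (Std.Symm.symm _ _ (hanchor c hc)).trans (hanchor c' hc')

end Connectivity

section Removal

variable {h : ℕ} {lam mu : ℕ → ℕ}

theorem quasiFerrers_diff_right_end (i : ℕ) :
    quasiFerrers h lam mu \ {(i, lam i)} =
      quasiFerrers h (Function.update lam i (lam i - 1)) mu := by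
  ext ⟨x, y⟩
  rcases eq_or_ne x i with rfl | hx
  · simp only [Set.mem_sdiff, mk_mem_quasiFerrers, Set.mem_singleton_iff, Prod.mk.injEq,
      Function.update_self, true_and]
    omega
  · simp [hx]

theorem quasiFerrers_diff_left_end (i : ℕ) :
    quasiFerrers h lam mu \ {(i, mu i + 1)} =
      quasiFerrers h lam (Function.update mu i (mu i + 1)) := by
  ext ⟨x, y⟩
  rcases eq_or_ne x i with rfl | hx
  · simp only [Set.mem_sdiff, mk_mem_quasiFerrers, Set.mem_singleton_iff, Prod.mk.injEq,
      Function.update_self, true_and]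
    omega
  · simp [hx]

theorem quasiFerrers_succ_diff_of_le (hle : lam (h + 1) ≤ mu (h + 1) + 1) :
    quasiFerrers (h + 1) lam mu \ {(h + 1, lam (h + 1))} = quasiFerrers h lam mu := by
  ext ⟨x, y⟩
  rcases eq_or_ne x (h + 1) with rfl | hx
  · simp only [Set.mem_sdiff, mk_mem_quasiFerrers, Set.mem_singleton_iff, Prod.mk.injEq, true_and]
    omega
  · simp only [Set.mem_sdiff, mk_mem_quasiFerrers, Set.mem_singleton_iff, Prod.mk.injEq, hx,
      false_and, not_false_eq_true, and_true]
    omega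

def IsRemovableCell (h : ℕ) (lam mu : ℕ → ℕ) (c : ℕ × ℕ) : Prop :=
  ∃ (h' : ℕ) (lam' mu' : ℕ → ℕ), IsShiftedPair h' lam' mu' ∧
    quasiFerrers h' lam' mu' = quasiFerrers h lam mu \ {c} ∧
    DiagramConnected (quasiFerrers h lam mu \ {c})

theorem isRemovableCell_of_rowsOverlap {c : ℕ × ℕ} {h' : ℕ} {lam' mu' : ℕ → ℕ}
    (hpart : IsShiftedPair h' lam' mu') (hov : RowsOverlap h' lam' mu')
    (heq : quasiFerrers h' lam' mu' = quasiFerrers h lam mu \ {c}) :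
    IsRemovableCell h lam mu c :=
  ⟨h', lam', mu', hpart, heq,
    heq ▸ diagramConnected_of_rowsOverlap (fun i hi hih => (hpart i hi hih).2) hov⟩

theorem isRemovableCell_top_of_le (hpart : IsShiftedPair (h + 1) lam mu)
    (hov : RowsOverlap (h + 1) lam mu) (hle : lam (h + 1) ≤ mu (h + 1) + 1) :
    IsRemovableCell (h + 1) lam mu (h + 1, lam (h + 1)) :=
  isRemovableCell_of_rowsOverlap (hpart.mono h.le_succ) (hov.mono h.le_succ)
    (quasiFerrers_succ_diff_of_le hle).symm

theorem isRemovableCell_top_right_end (hpart : IsShiftedPair (h + 1) lam mu)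
    (hov : RowsOverlap (h + 1) lam mu) (hlong : mu (h + 1) + 1 < lam (h + 1))
    (hprev : 0 < h → mu h + 1 < lam (h + 1)) :
    IsRemovableCell (h + 1) lam mu (h + 1, lam (h + 1)) := by
  have hbelow : ∀ i ≤ h, Function.update lam (h + 1) (lam (h + 1) - 1) i = lam i :=
    fun i hi => Function.update_of_ne (by omega) _ _
  refine isRemovableCell_of_rowsOverlap ?_ ?_ (quasiFerrers_diff_right_end (h + 1)).symm
  · refine (hpart.mono h.le_succ).of_eq_below_top hbelow (fun _ _ => rfl) ?_
    have := (hpart (h + 1) (by omega) le_rfl).1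
    simp only [Function.update_self]
    omega
  · refine (hov.mono h.le_succ).of_eq_below_top hbelow (fun _ _ => rfl) fun hh => ?_
    have := (hov h hh (Nat.lt_succ_self h)).2
    have := hprev hh
    simp only [Function.update_self, hbelow h le_rfl]
    omega

theorem isRemovableCell_top_left_end (hpart : IsShiftedPair (h + 1) lam mu)
    (hov : RowsOverlap (h + 1) lam mu) (hlong : mu (h + 1) + 1 < lam (h + 1))
    (hprev : 0 < h → mu (h + 1) + 1 < lam h) :
    IsRemovableCell (h + 1) lam mu (h + 1, mu (h + 1) + 1) := by
  have hbelow : ∀ i ≤ h, Function.update mu (h + 1) (mu (h + 1) + 1) i = mu i :=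
    fun i hi => Function.update_of_ne (by omega) _ _
  refine isRemovableCell_of_rowsOverlap ?_ ?_ (quasiFerrers_diff_left_end (h + 1)).symm
  · refine (hpart.mono h.le_succ).of_eq_below_top (fun _ _ => rfl) hbelow ?_
    have := (hpart (h + 1) (by omega) le_rfl).1
    simp only [Function.update_self]
    omega
  · refine (hov.mono h.le_succ).of_eq_below_top (fun _ _ => rfl) hbelow fun hh => ?_
    have := (hov h hh (Nat.lt_succ_self h)).1
    have := hprev hh
    simp only [Function.update_self, hbelow h le_rfl]
    omega

end Removal

/-- From a connected shifted quasi-Ferrers diagram with at least two lattice points,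
one can remove a point `c` so that the rest is again a connected shifted
quasi-Ferrers diagram for a suitably modified pair `λ', μ'`. -/
theorem quasiFerrers_remove_point (h : ℕ) (lam mu : ℕ → ℕ)
    (hpart : ∀ i, 1 ≤ i → i ≤ h → i - 1 ≤ mu i ∧ mu i < lam i)
    (hconn : DiagramConnected (quasiFerrers h lam mu))
    (htwo : ∃ c₁ c₂ : ℕ × ℕ, c₁ ∈ quasiFerrers h lam mu ∧
      c₂ ∈ quasiFerrers h lam mu ∧ c₁ ≠ c₂) :
    ∃ c ∈ quasiFerrers h lam mu, ∃ (h' : ℕ) (lam' mu' : ℕ → ℕ),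
      (∀ i, 1 ≤ i → i ≤ h' → i - 1 ≤ mu' i ∧ mu' i < lam' i) ∧
      quasiFerrers h' lam' mu' = quasiFerrers h lam mu \ {c} ∧
      DiagramConnected (quasiFerrers h lam mu \ {c}) := by
  obtain ⟨c, -, ⟨hc₁, hch, -⟩, -, -⟩ := htwo
  obtain ⟨n, rfl⟩ : ∃ n, h = n + 1 := ⟨h - 1, by omega⟩
  have hov := rowsOverlap_of_diagramConnected (fun i hi hih => (hpart i hi hih).2) hconn
  have htop := (hpart (n + 1) (by omega) le_rfl).2
  have hright_end : (n + 1, lam (n + 1)) ∈ quasiFerrers (n + 1) lam mu :=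
    mk_lam_mem_quasiFerrers (by omega) le_rfl htop
  rcases le_or_gt (lam (n + 1)) (mu (n + 1) + 1) with hsingle | hlong
  · exact ⟨_, hright_end, isRemovableCell_top_of_le hpart hov hsingle⟩
  rcases le_or_gt (lam (n + 1)) (lam n) with hle_prev | hgt_prev
  · exact ⟨_, mk_mu_succ_mem_quasiFerrers (by omega) le_rfl htop,
      isRemovableCell_top_left_end hpart hov hlong fun _ => by omega⟩
  · refine ⟨_, hright_end, isRemovableCell_top_right_end hpart hov hlong fun hn => ?_⟩
    have := (hpart n hn (by omega)).2
    omega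
end
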